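/- For the qubit dynamical map Ψ_t defined in the Pauli basis by Ψ_t((1₂ + x₁σ₁ + x₂σ₂ + x₃σ₃)/2) = (1₂ + e^{−t}cosh(t)(x₁σ₁ + x₂σ₂) + e^{−2t} x₃σ₃)/2, the Choi matrix has eigenvalues {0, (1−e^{−2t})/2, (1−e^{−2t})/2, 1+e^{−2t}}, all nonnegative; hence Ψ_t is completely positive for every t ≥ 0. -/

import Mathlib

open Matrix Complex Kronecker Polynomial ComplexOrder

/-- `σ₀ = 1₂` together with the three Pauli matrices. -/
noncomputable def pauli4 : Fin 4 → Matrix (Fin 2) (Fin 2) ℂ :=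
  ![1, !![0, 1; 1, 0], !![0, -I; I, 0], !![1, 0; 0, -1]]

/-- The matrix of the dynamical map `Ψ_t` in the normalized Pauli basis:
`diag(1, e^{−t}cosh t, e^{−t}cosh t, e^{−2t})`. -/
noncomputable def Fmap (t : ℝ) : Fin 4 → Fin 4 → ℝ :=
  fun i j =>
    if i = j then
      (if i = 0 then 1
       else if i = 3 then Real.exp (-(2 * t))
       else Real.exp (-t) * Real.cosh t)
    else 0

/-- The Choi matrix `C(t) = ∑_{i,j} (F_{ji}(t)/2) σ̄_i ⊗ σ_j`. -/
noncomputable def choi (t : ℝ) : Matrix (Fin 2 × Fin 2) (Fin 2 × Fin 2) ℂ :=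
  ∑ i, ∑ j, ((Fmap t j i / 2 : ℝ) : ℂ) •
    ((pauli4 i).map (starRingEnd ℂ) ⊗ₖ pauli4 j)

noncomputable def genM (a b : ℂ) : Matrix (Fin 4) (Fin 4) ℂ :=
  !![a,0,0,a; 0,b,0,0; 0,0,b,0; a,0,0,a]

lemma gen_charpoly (a b : ℂ) :
    (genM a b).charpoly = X * (X - C b)^2 * (X - C (2*a)) := by
  rw [Matrix.charpoly]
  have h : (genM a b).charmatrix =
      !![X - C a, 0, 0, -C a; 0, X - C b, 0, 0; 0, 0, X - C b, 0;
         -C a, 0, 0, X - C a] := by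
    ext i j
    fin_cases i <;> fin_cases j <;>
      simp [genM, Matrix.charmatrix_apply, Matrix.one_apply, vecHead, vecTail]
  rw [h]
  simp [Matrix.det_succ_row_zero, Fin.sum_univ_succ, vecHead, vecTail, Fin.castSucc, Fin.castAdd, Fin.castLE]
  ring_nf
  simp [map_ofNat]
  rw [show (![0, 0, X - C b, 0] : Fin 4 → ℂ[X]) (Fin.succAbove 3 2) = X - C b from rfl]
  ring

lemma gen_psd (a b : ℝ) (ha : 0 ≤ a) (hb : 0 ≤ b) :
    (genM (a:ℂ) (b:ℂ)).PosSemidef := by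
  have h : genM (a:ℂ) (b:ℂ) =
      (!![((Real.sqrt a : ℝ):ℂ),0,0,((Real.sqrt a : ℝ):ℂ);
          0,((Real.sqrt b : ℝ):ℂ),0,0;
          0,0,((Real.sqrt b : ℝ):ℂ),0; 0,0,0,0])ᴴ *
        !![((Real.sqrt a : ℝ):ℂ),0,0,((Real.sqrt a : ℝ):ℂ);
          0,((Real.sqrt b : ℝ):ℂ),0,0;
          0,0,((Real.sqrt b : ℝ):ℂ),0; 0,0,0,0] := by
    ext i j
    fin_cases i <;> fin_cases j <;>
      simp [genM, Matrix.mul_apply, Fin.sum_univ_four, vecHead, vecTail,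
        ← Complex.ofReal_mul, Real.mul_self_sqrt ha, Real.mul_self_sqrt hb]
  rw [h]
  exact Matrix.posSemidef_conjTranspose_mul_self _

lemma cosh_half (t : ℝ) : Real.exp (-t) * Real.cosh t = (1 + Real.exp (-(2*t)))/2 := by
  rw [Real.cosh_eq]
  have h1 : Real.exp (-t) * Real.exp t = 1 := by rw [← Real.exp_add]; simp
  have h2 : Real.exp (-t) * Real.exp (-t) = Real.exp (-(2*t)) := by
    rw [← Real.exp_add]; ring_nf
  field_simp
  rw [mul_comm t 2]
  nlinarith [h1, h2]

lemma choi_diag (t : ℝ) : choi t =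
    ∑ i, ((Fmap t i i / 2 : ℝ) : ℂ) • ((pauli4 i).map (starRingEnd ℂ) ⊗ₖ pauli4 i) := by
  unfold choi
  refine Finset.sum_congr rfl fun i _ => ?_
  rw [Finset.sum_eq_single i]
  · intro j _ hj
    have : Fmap t j i = 0 := by simp [Fmap, hj]
    simp [this]
  · simp

lemma choi_eq (t : ℝ) : choi t =
    (genM ((((1 + Real.exp (-(2*t)))/2 : ℝ)) : ℂ) ((((1 - Real.exp (-(2*t)))/2 : ℝ)) : ℂ)).submatrix
      finProdFinEquiv finProdFinEquiv := by
  have h := cosh_half t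
  rw [choi_diag]
  ext ⟨i,j⟩ ⟨k,l⟩
  fin_cases i <;> fin_cases j <;> fin_cases k <;> fin_cases l <;>
    simp [Fmap, pauli4, genM, Fin.sum_univ_four, h, finProdFinEquiv, Matrix.one_apply] <;>
    first | rfl | decide | (push_cast; ring)

theorem stmt_13 (t : ℝ) (ht : 0 ≤ t) :
    (choi t).charpoly =
      X *
      (X - C ((((1 - Real.exp (-(2 * t))) / 2) : ℝ) : ℂ)) ^ 2 *
      (X - C (((1 + Real.exp (-(2 * t))) : ℝ) : ℂ)) ∧
    (choi t).PosSemidef := by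
  set a : ℂ := ((((1 + Real.exp (-(2*t)))/2 : ℝ)) : ℂ) with ha
  set b : ℂ := ((((1 - Real.exp (-(2*t)))/2 : ℝ)) : ℂ) with hb
  constructor
  · rw [choi_eq]
    have h2 := Matrix.charpoly_reindex
      ((finProdFinEquiv (m := 2) (n := 2)).symm) (genM a b)
    simp only [Matrix.reindex_apply, Equiv.symm_symm] at h2
    rw [h2, gen_charpoly]
    congr 2
    rw [ha]
    push_cast
    ring
  · rw [choi_eq]
    have hb' : (0:ℝ) ≤ (1 - Real.exp (-(2*t)))/2 := by
      have : Real.exp (-(2*t)) ≤ 1 := Real.exp_le_one_iff.mpr (by linarith)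
      linarith
    exact (gen_psd _ _ (by positivity) hb').submatrix _
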